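/- arXiv:2604.06039 — 6 statements merged into one kernel-verified Lean document; each statement's English description precedes it below -/
import Mathlib

section
/- In the deterministic value mirror descent epoch, if π_{t+1} minimizes η_t[⟨c(s,·)+γP_sV_t, π⟩ + h(π)] + D(π_t(·|s), π) over Δ_A for each state s, V_{t+1} = Γ_{π_{t+1}} V_t, and at the start V_0 ≥ Γ_{π_0} V_0, then the sequences satisfy V_0 ≥ V_1 ≥ ⋯ ≥ V_T and V_t ≥ Γ_{π_t} V_t ≥ V^{π_t} ≥ V* for every t = 0, …, T. -/
/-- The policy Bellman operator `(Γ_π V)(s) = ⟨c(s,·) + γ P_s V, π(·|s)⟩ + h(π(·|s))`. -/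
noncomputable def Bellman {S A : Type*} [Fintype S] [Fintype A]
    (c : S → A → ℝ) (P : S → A → S → ℝ) (h : (A → ℝ) → ℝ) (γ : ℝ)
    (π : S → A → ℝ) (V : S → ℝ) (s : S) : ℝ :=
  (∑ a, π s a * (c s a + γ * ∑ s', P s a s' * V s')) + h (π s)

lemma bellman_mono {S A : Type*} [Fintype S] [Fintype A]
    {γ : ℝ} (hγ0 : 0 < γ)
    (c : S → A → ℝ) (P : S → A → S → ℝ)
    (hP0 : ∀ s a s', 0 ≤ P s a s')
    (h : (A → ℝ) → ℝ)
    (p : S → A → ℝ) (hp : ∀ s, p s ∈ stdSimplex ℝ A)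
    {V W : S → ℝ} (hVW : ∀ s, V s ≤ W s) (s : S) :
    Bellman c P h γ p V s ≤ Bellman c P h γ p W s := by
  unfold Bellman
  gcongr with a _
  · exact (hp s).1 a
  · exact hP0 s a _
  · exact hVW _

lemma bellman_diff {S A : Type*} [Fintype S] [Fintype A]
    (γ : ℝ) (c : S → A → ℝ) (P : S → A → S → ℝ)
    (h : (A → ℝ) → ℝ) (p : S → A → ℝ) (V W : S → ℝ) (s : S) :
    Bellman c P h γ p V s - Bellman c P h γ p W s
      = ∑ a, p s a * (γ * ∑ s', P s a s' * (V s' - W s')) := by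
  unfold Bellman
  have key : ∀ a : A, p s a * (γ * ∑ s', P s a s' * (V s' - W s'))
      = p s a * (c s a + γ * ∑ s', P s a s' * V s')
        - p s a * (c s a + γ * ∑ s', P s a s' * W s') := by
    intro a
    have hs : ∑ s', P s a s' * (V s' - W s')
        = (∑ s', P s a s' * V s') - ∑ s', P s a s' * W s' := by
      rw [← Finset.sum_sub_distrib]
      exact Finset.sum_congr rfl (fun s' _ => by ring)
    rw [hs]; ring
  rw [Finset.sum_congr rfl (fun a _ => key a), Finset.sum_sub_distrib]
  ring

lemma fixed_le {S A : Type*} [Fintype S] [Fintype A]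
    {γ : ℝ} (hγ0 : 0 < γ) (hγ1 : γ < 1)
    (c : S → A → ℝ) (P : S → A → S → ℝ)
    (hP0 : ∀ s a s', 0 ≤ P s a s') (hP1 : ∀ s a, ∑ s', P s a s' = 1)
    (h : (A → ℝ) → ℝ)
    (p : S → A → ℝ) (hp : ∀ s, p s ∈ stdSimplex ℝ A)
    (W0 : S → ℝ) (hW0 : ∀ s, W0 s = Bellman c P h γ p W0 s)
    (W : S → ℝ) (hW : ∀ s, Bellman c P h γ p W s ≤ W s) :
    ∀ s, W0 s ≤ W s := by
  intro s
  have hne : (Finset.univ : Finset S).Nonempty := ⟨s, Finset.mem_univ s⟩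
  set M := Finset.univ.sup' hne (fun s => W0 s - W s) with hM
  have hbound : ∀ s0 : S, W0 s0 - W s0 ≤ γ * M := by
    intro s0
    have h1 : W0 s0 - W s0 ≤ Bellman c P h γ p W0 s0 - Bellman c P h γ p W s0 := by
      have := hW s0; have := hW0 s0; linarith
    rw [bellman_diff] at h1
    refine h1.trans ?_
    have h2 : ∀ a : A, p s0 a * (γ * ∑ s', P s0 a s' * (W0 s' - W s'))
        ≤ p s0 a * (γ * M) := by
      intro a
      apply mul_le_mul_of_nonneg_left _ ((hp s0).1 a)
      apply mul_le_mul_of_nonneg_left _ hγ0.le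
      calc ∑ s', P s0 a s' * (W0 s' - W s')
          ≤ ∑ s', P s0 a s' * M := by
            apply Finset.sum_le_sum
            intro s' _
            exact mul_le_mul_of_nonneg_left
              (Finset.le_sup' (fun s => W0 s - W s) (Finset.mem_univ s')) (hP0 _ _ _)
        _ = M := by rw [← Finset.sum_mul, hP1, one_mul]
    calc ∑ a, p s0 a * (γ * ∑ s', P s0 a s' * (W0 s' - W s'))
        ≤ ∑ a, p s0 a * (γ * M) := Finset.sum_le_sum (fun a _ => h2 a)
      _ = γ * M := by rw [← Finset.sum_mul, (hp s0).2, one_mul]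
  have hMle : M ≤ γ * M := Finset.sup'_le hne _ (fun s0 _ => hbound s0)
  have hM0 : M ≤ 0 := by nlinarith
  have := Finset.le_sup' (fun s => W0 s - W s) (Finset.mem_univ s)
  linarith [this.trans hM0]

/-- In a deterministic value mirror descent epoch, if each `π_{t+1}(·|s)`
minimizes the prox objective `η_t[⟨c(s,·)+γP_sV_t, π⟩ + h(π)] + D(π_t(·|s), π)` over the
simplex, `V_{t+1} = Γ_{π_{t+1}} V_t`, and initially `V_0 ≥ Γ_{π_0} V_0`, then
`V_0 ≥ V_1 ≥ ⋯ ≥ V_T` and `V_t ≥ Γ_{π_t} V_t ≥ V^{π_t} ≥ V*` for every `t ≤ T`. -/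
theorem vmd_monotonicity
    {S A : Type*} [Fintype S] [Fintype A]
    (γ : ℝ) (hγ0 : 0 < γ) (hγ1 : γ < 1)
    (c : S → A → ℝ) (P : S → A → S → ℝ)
    (hP0 : ∀ s a s', 0 ≤ P s a s') (hP1 : ∀ s a, ∑ s', P s a s' = 1)
    (h : (A → ℝ) → ℝ)
    (D : (A → ℝ) → (A → ℝ) → ℝ) (hD : ∀ x y, 0 ≤ D x y) (hDzero : ∀ x, D x x = 0)
    (T : ℕ) (η : ℕ → ℝ) (hη : ∀ t, 0 < η t)
    (π : ℕ → S → A → ℝ) (hπ : ∀ t s, π t s ∈ stdSimplex ℝ A)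
    (V : ℕ → S → ℝ)
    (hprox : ∀ t < T, ∀ s, ∀ p ∈ stdSimplex ℝ A,
      η t * ((∑ a, (c s a + γ * ∑ s', P s a s' * V t s') * π (t + 1) s a) + h (π (t + 1) s))
          + D (π t s) (π (t + 1) s)
        ≤ η t * ((∑ a, (c s a + γ * ∑ s', P s a s' * V t s') * p a) + h p) + D (π t s) p)
    (hupd : ∀ t < T, ∀ s, V (t + 1) s = Bellman c P h γ (π (t + 1)) (V t) s)
    (hinit : ∀ s, Bellman c P h γ (π 0) (V 0) s ≤ V 0 s)
    (Vpi : ℕ → S → ℝ) (hVpi : ∀ t s, Vpi t s = Bellman c P h γ (π t) (Vpi t) s)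
    (Vstar : S → ℝ)
    (hVstar : ∀ p : S → A → ℝ, (∀ s, p s ∈ stdSimplex ℝ A) →
      ∀ W : S → ℝ, (∀ s, W s = Bellman c P h γ p W s) → ∀ s, Vstar s ≤ W s) :
    (∀ t < T, ∀ s, V (t + 1) s ≤ V t s) ∧
      (∀ t ≤ T, ∀ s, Bellman c P h γ (π t) (V t) s ≤ V t s
        ∧ Vpi t s ≤ Bellman c P h γ (π t) (V t) s ∧ Vstar s ≤ Vpi t s) := by
  -- step comparison: for t < T, Γ_{π_{t+1}} V_t ≤ Γ_{π_t} V_t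
  have hstep : ∀ t < T, ∀ s,
      Bellman c P h γ (π (t + 1)) (V t) s ≤ Bellman c P h γ (π t) (V t) s := by
    intro t ht s
    have hpx := hprox t ht s (π t s) (hπ t s)
    rw [hDzero] at hpx
    have hD' := hD (π t s) (π (t + 1) s)
    have hηt := hη t
    have h2 : (∑ a, (c s a + γ * ∑ s', P s a s' * V t s') * π (t + 1) s a) + h (π (t + 1) s)
        ≤ (∑ a, (c s a + γ * ∑ s', P s a s' * V t s') * π t s a) + h (π t s) := by
      nlinarith
    unfold Bellman
    calc (∑ a, π (t + 1) s a * (c s a + γ * ∑ s', P s a s' * V t s')) + h (π (t + 1) s)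
        = (∑ a, (c s a + γ * ∑ s', P s a s' * V t s') * π (t + 1) s a) + h (π (t + 1) s) := by
          rw [Finset.sum_congr rfl (fun a _ => mul_comm _ _)]
      _ ≤ (∑ a, (c s a + γ * ∑ s', P s a s' * V t s') * π t s a) + h (π t s) := h2
      _ = (∑ a, π t s a * (c s a + γ * ∑ s', P s a s' * V t s')) + h (π t s) := by
          rw [Finset.sum_congr rfl (fun a _ => mul_comm _ _)]
  -- main invariant
  have key : ∀ t, t ≤ T → ∀ s, Bellman c P h γ (π t) (V t) s ≤ V t s := by
    intro t
    induction t with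
    | zero => intro _ s; exact hinit s
    | succ t ih =>
      intro hle s
      have ht : t < T := Nat.lt_of_succ_le hle
      have ihs := ih (Nat.le_of_lt ht)
      have hle1 : ∀ s, V (t + 1) s ≤ V t s := by
        intro s0
        rw [hupd t ht s0]
        exact (hstep t ht s0).trans (ihs s0)
      calc Bellman c P h γ (π (t + 1)) (V (t + 1)) s
          ≤ Bellman c P h γ (π (t + 1)) (V t) s :=
            bellman_mono hγ0 c P hP0 h (π (t + 1)) (hπ (t + 1)) hle1 s
        _ = V (t + 1) s := (hupd t ht s).symm
  have hdec : ∀ t < T, ∀ s, V (t + 1) s ≤ V t s := by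
    intro t ht s
    rw [hupd t ht s]
    exact (hstep t ht s).trans (key t (Nat.le_of_lt ht) s)
  refine ⟨hdec, fun t htT s => ?_⟩
  have hVpile : ∀ s, Vpi t s ≤ V t s :=
    fixed_le hγ0 hγ1 c P hP0 hP1 h (π t) (hπ t) (Vpi t) (hVpi t) (V t) (key t htT)
  refine ⟨key t htT s, ?_, hVstar (π t) (hπ t) (Vpi t) (hVpi t) s⟩
  calc Vpi t s = Bellman c P h γ (π t) (Vpi t) s := hVpi t s
    _ ≤ Bellman c P h γ (π t) (V t) s :=
        bellman_mono hγ0 c P hP0 h (π t) (hπ t) hVpile s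
end

section
/- Deterministic single-epoch bound: under value mirror descent with constant stepsize η > 0 over T iterations, the iterates satisfy (V_T − V*) + ∑_{t=1}^{T-1} (I − γP_{π*})(V_t − V*) + (1/η) D_{π_T}^{π*} ≤ (1/η) D_{π_0}^{π*} + γP_{π*}(V_0 − V*) componentwise, where D_{π}^{π*} ∈ ℝ^{|S|} has entries D(π(·|s), π*(·|s)). -/
/-!
Taking `p = π*` in the three-point inequality of step `t` and dropping `D(π_t, π_{t+1}) ≥ 0`
bounds the one-step advantage `Γ_{π_{t+1}} V_t − Γ_{π*} V_t` by the Bregman decrease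
`(D(π_t, π*) − D(π_{t+1}, π*)) / η`. Since `V_{t+1} = Γ_{π_{t+1}} V_t` and
`Γ_{π*} V_t − V* = γ P_{π*} (V_t − V*)`, this is `(V_{t+1} − V*) − γ P_{π*}(V_t − V*)`;
summing over `t < T` telescopes the divergences.
-/

namespace Bellman

variable {S A : Type*} [Fintype S] [Fintype A]
  (c : S → A → ℝ) (P : S → A → S → ℝ) (h : (A → ℝ) → ℝ) (γ : ℝ)

theorem sub_of_policy_eq (π : S → A → ℝ) (V W : S → ℝ) (s : S) :
    Bellman c P h γ π V s - Bellman c P h γ π W s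
      = γ * ∑ s', (∑ a, π s a * P s a s') * (V s' - W s') := by
  simp only [Bellman, add_sub_add_right_eq_sub, ← Finset.sum_sub_distrib, Finset.mul_sum,
    Finset.sum_mul]
  rw [Finset.sum_comm]
  refine Finset.sum_congr rfl fun a _ => ?_
  rw [← mul_sub, add_sub_add_left_eq_sub, ← Finset.sum_sub_distrib, Finset.mul_sum]
  exact Finset.sum_congr rfl fun s' _ => by ring

theorem sub_of_value_eq (π π' : S → A → ℝ) (V : S → ℝ) (s : S) :
    Bellman c P h γ π V s - Bellman c P h γ π' V s
      = (∑ a, (c s a + γ * ∑ s', P s a s' * V s') * (π s a - π' s a))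
        + h (π s) - h (π' s) := by
  have hsum : ∑ a, (c s a + γ * ∑ s', P s a s' * V s') * (π s a - π' s a)
      = (∑ a, π s a * (c s a + γ * ∑ s', P s a s' * V s'))
        - ∑ a, π' s a * (c s a + γ * ∑ s', P s a s' * V s') := by
    rw [← Finset.sum_sub_distrib]
    exact Finset.sum_congr rfl fun a _ => by ring
  rw [hsum, Bellman, Bellman]
  ring

variable {c P h γ}

theorem sub_fixedPoint_le_of_threePoint {D : (A → ℝ) → (A → ℝ) → ℝ} {η : ℝ} (hη : 0 < η)
    {π π' πstar : S → A → ℝ} {V Vstar : S → ℝ} {s : S}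
    (hD : 0 ≤ D (π s) (π' s))
    (hthree : η * ((∑ a, (c s a + γ * ∑ s', P s a s' * V s') * (π' s a - πstar s a))
          + h (π' s) - h (πstar s)) + D (π s) (π' s)
        ≤ D (π s) (πstar s) - D (π' s) (πstar s))
    (hVstar : Vstar s = Bellman c P h γ πstar Vstar s) :
    (Bellman c P h γ π' V s - Vstar s)
        - γ * ∑ s', (∑ a, πstar s a * P s a s') * (V s' - Vstar s')
      ≤ (1 / η) * D (π s) (πstar s) - (1 / η) * D (π' s) (πstar s) := by
  have hgap : (Bellman c P h γ π' V s - Vstar s)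
        - γ * ∑ s', (∑ a, πstar s a * P s a s') * (V s' - Vstar s')
      = Bellman c P h γ π' V s - Bellman c P h γ πstar V s := by
    rw [← sub_of_policy_eq, hVstar]
    ring
  rw [hgap, sub_of_value_eq, ← mul_sub, one_div_mul_eq_div, le_div_iff₀' hη]
  linarith

end Bellman

theorem add_sum_Ico_sub_add_le_of_le_sub {f g E : ℕ → ℝ} {T : ℕ} (hT : 1 ≤ T)
    (hstep : ∀ t < T, f (t + 1) - g t ≤ E t - E (t + 1)) :
    f T + ∑ t ∈ Finset.Ico 1 T, (f t - g t) + E T ≤ E 0 + g 0 := by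
  induction T, hT using Nat.le_induction with
  | base =>
    simp only [Finset.Ico_self, Finset.sum_empty, add_zero]
    linarith [hstep 0 one_pos]
  | succ T hT ih =>
    have hlast := hstep T (Nat.lt_succ_self T)
    have hprev := ih fun t ht => hstep t (Nat.lt_succ_of_lt ht)
    rw [Finset.sum_Ico_succ_top hT]
    linarith

theorem vmd_single_epoch_bound_general
    {S A : Type*} [Fintype S] [Fintype A]
    (γ : ℝ)
    (c : S → A → ℝ) (P : S → A → S → ℝ)
    (h : (A → ℝ) → ℝ)
    (D : (A → ℝ) → (A → ℝ) → ℝ) (hD : ∀ x y, 0 ≤ D x y)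
    (T : ℕ) (hT : 1 ≤ T) (η : ℝ) (hη : 0 < η)
    (π : ℕ → S → A → ℝ)
    (V : ℕ → S → ℝ)
    (hthree : ∀ t < T, ∀ s, ∀ p ∈ stdSimplex ℝ A,
      η * ((∑ a, (c s a + γ * ∑ s', P s a s' * V t s') * (π (t + 1) s a - p a))
            + h (π (t + 1) s) - h p) + D (π t s) (π (t + 1) s)
        ≤ D (π t s) p - D (π (t + 1) s) p)
    (hupd : ∀ t < T, ∀ s, V (t + 1) s = Bellman c P h γ (π (t + 1)) (V t) s)
    (πstar : S → A → ℝ) (hπstar : ∀ s, πstar s ∈ stdSimplex ℝ A)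
    (Vstar : S → ℝ) (hVstar : ∀ s, Vstar s = Bellman c P h γ πstar Vstar s) :
    ∀ s, (V T s - Vstar s)
        + (∑ t ∈ Finset.Ico 1 T, ((V t s - Vstar s)
            - γ * ∑ s', (∑ a, πstar s a * P s a s') * (V t s' - Vstar s')))
        + (1 / η) * D (π T s) (πstar s)
      ≤ (1 / η) * D (π 0 s) (πstar s)
        + γ * ∑ s', (∑ a, πstar s a * P s a s') * (V 0 s' - Vstar s') := by
  intro s
  refine add_sum_Ico_sub_add_le_of_le_sub (f := fun t => V t s - Vstar s)
    (g := fun t => γ * ∑ s', (∑ a, πstar s a * P s a s') * (V t s' - Vstar s'))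
    (E := fun t => (1 / η) * D (π t s) (πstar s)) hT fun t ht => ?_
  rw [hupd t ht s]
  exact Bellman.sub_fixedPoint_le_of_threePoint hη (hD _ _)
    (hthree t ht s (πstar s) (hπstar s)) (hVstar s)

/-- Deterministic single-epoch bound for value mirror descent with constant
stepsize `η > 0` over `T ≥ 1` iterations (assuming the three-point lemma for each prox
step): componentwise,
`(V_T − V*) + ∑_{t=1}^{T-1} (I − γP_{π*})(V_t − V*) + (1/η) D_{π_T}^{π*}
  ≤ (1/η) D_{π_0}^{π*} + γ P_{π*}(V_0 − V*)`. -/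
theorem vmd_single_epoch_bound
    {S A : Type*} [Fintype S] [Fintype A]
    (γ : ℝ) (hγ0 : 0 < γ) (hγ1 : γ < 1)
    (c : S → A → ℝ) (P : S → A → S → ℝ)
    (hP0 : ∀ s a s', 0 ≤ P s a s') (hP1 : ∀ s a, ∑ s', P s a s' = 1)
    (h : (A → ℝ) → ℝ)
    (D : (A → ℝ) → (A → ℝ) → ℝ) (hD : ∀ x y, 0 ≤ D x y)
    (T : ℕ) (hT : 1 ≤ T) (η : ℝ) (hη : 0 < η)
    (π : ℕ → S → A → ℝ) (hπ : ∀ t s, π t s ∈ stdSimplex ℝ A)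
    (V : ℕ → S → ℝ)
    (hthree : ∀ t < T, ∀ s, ∀ p ∈ stdSimplex ℝ A,
      η * ((∑ a, (c s a + γ * ∑ s', P s a s' * V t s') * (π (t + 1) s a - p a))
            + h (π (t + 1) s) - h p) + D (π t s) (π (t + 1) s)
        ≤ D (π t s) p - D (π (t + 1) s) p)
    (hupd : ∀ t < T, ∀ s, V (t + 1) s = Bellman c P h γ (π (t + 1)) (V t) s)
    (πstar : S → A → ℝ) (hπstar : ∀ s, πstar s ∈ stdSimplex ℝ A)
    (Vstar : S → ℝ) (hVstar : ∀ s, Vstar s = Bellman c P h γ πstar Vstar s) :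
    ∀ s, (V T s - Vstar s)
        + (∑ t ∈ Finset.Ico 1 T, ((V t s - Vstar s)
            - γ * ∑ s', (∑ a, πstar s a * P s a s') * (V t s' - Vstar s')))
        + (1 / η) * D (π T s) (πstar s)
      ≤ (1 / η) * D (π 0 s) (πstar s)
        + γ * ∑ s', (∑ a, πstar s a * P s a s') * (V 0 s' - Vstar s') :=
  vmd_single_epoch_bound_general γ c P h D hD T hT η hη π V hthree hupd πstar hπstar Vstar hVstar
end

section
/- Bellman equation for the variance of discounted cumulative cost: for any stationary policy π, the vector Σ^π ∈ ℝ^{|S|} of variances Σ^π(s) = E_π[(∑_{t≥0} γ^t (c(s_t,a_t)+h(π(·|s_t))) − V^π(s))² | s_0 = s] satisfies Σ^π = γ² σ^π_{V^π} + γ² P_π Σ^π, where σ^π_{V^π}(s) = ∑_{s'} P_π(s,s') V^π(s')² − (∑_{s'} P_π(s,s') V^π(s'))². -/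
open Matrix

/-- Probability weight of a finite trajectory `s, path 0, path 1, …, path (n-1)` of the
Markov chain with transition matrix `P`, started at `s`. -/
noncomputable def trajWeight {S : Type*} [Fintype S] (P : Matrix S S ℝ) (s : S)
    {n : ℕ} (path : Fin n → S) : ℝ :=
  ∏ i : Fin n,
    P ((Fin.cons s path : Fin (n + 1) → S) i.castSucc)
      ((Fin.cons s path : Fin (n + 1) → S) i.succ)

/-- Discounted cumulative cost `∑_{t=0}^{n} γ^t r(traj t)` along a finite trajectory. -/
noncomputable def discReturn {S : Type*} (γ : ℝ) (r : S → ℝ)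
    {n : ℕ} (traj : Fin (n + 1) → S) : ℝ :=
  ∑ t : Fin (n + 1), γ ^ (t : ℕ) * r (traj t)

section Aux
variable {S : Type*} [Fintype S]

lemma trajWeight_cons (P : Matrix S S ℝ) (s s' : S) {n : ℕ} (g : Fin n → S) :
    trajWeight P s (Fin.cons s' g) = P s s' * trajWeight P s' g := by
  unfold trajWeight
  rw [Fin.prod_univ_succ]
  simp [← Fin.succ_castSucc, Fin.cons_succ]

omit [Fintype S] in
lemma discReturn_cons (γ : ℝ) (r : S → ℝ) (s s' : S) {n : ℕ} (g : Fin n → S) :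
    discReturn γ r (Fin.cons s (Fin.cons s' g)) = r s + γ * discReturn γ r (Fin.cons s' g) := by
  unfold discReturn
  rw [Fin.sum_univ_succ]
  simp [Fin.cons_succ, Finset.mul_sum, mul_comm, mul_assoc, pow_succ, mul_left_comm]

lemma sum_paths_cons {n : ℕ} (F : (Fin (n + 1) → S) → ℝ) :
    ∑ p : Fin (n + 1) → S, F p = ∑ s' : S, ∑ g : Fin n → S, F (Fin.cons s' g) := by
  rw [← (Fin.consEquiv fun _ => S).sum_comp F, Fintype.sum_prod_type]
  rfl

lemma trajWeight_sum (P : Matrix S S ℝ) (hP1 : ∀ s, ∑ s', P s s' = 1) :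
    ∀ (n : ℕ) (s : S), ∑ p : Fin n → S, trajWeight P s p = 1 := by
  intro n
  induction n with
  | zero => intro s; simp [trajWeight]
  | succ n ih =>
    intro s
    rw [sum_paths_cons]
    simp only [trajWeight_cons]
    calc ∑ s' : S, ∑ g : Fin n → S, P s s' * trajWeight P s' g
        = ∑ s' : S, P s s' * ∑ g : Fin n → S, trajWeight P s' g := by
          simp [Finset.mul_sum]
      _ = 1 := by simp [ih, hP1 s]

/-- Finite-horizon expected deviation of the return from `V`. -/
noncomputable def Afun (P : Matrix S S ℝ) (γ : ℝ) (r V : S → ℝ) (n : ℕ) (s : S) : ℝ :=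
  ∑ p : Fin n → S, trajWeight P s p * (discReturn γ r (Fin.cons s p) - V s)

/-- Finite-horizon expected squared deviation of the return from `V`. -/
noncomputable def Mfun (P : Matrix S S ℝ) (γ : ℝ) (r V : S → ℝ) (n : ℕ) (s : S) : ℝ :=
  ∑ p : Fin n → S, trajWeight P s p * (discReturn γ r (Fin.cons s p) - V s) ^ 2

end Aux

/-- Bellman equation for the variance of the discounted cumulative cost.
If `V` is the value function (`V = r + γ P V`) and `Svar(s)` is the variance of the
discounted return started at `s` (obtained as the limit of finite-horizon expectations
of the squared deviation from `V(s)`), then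
`Svar = γ² σ^π_{V} + γ² P Svar`, where `σ^π_V(s) = (P V²)(s) − ((P V)(s))²`. -/
theorem variance_bellman_equation
    {S : Type*} [Fintype S]
    (γ : ℝ) (hγ0 : 0 < γ) (hγ1 : γ < 1)
    (P : Matrix S S ℝ)
    (hP0 : ∀ s s', 0 ≤ P s s') (hP1 : ∀ s, ∑ s', P s s' = 1)
    (r V Svar : S → ℝ)
    (hV : ∀ s, V s = r s + γ * P.mulVec V s)
    (hSvar : ∀ s, Filter.Tendsto
      (fun n : ℕ => ∑ path : Fin n → S,
        trajWeight P s path * (discReturn γ r (Fin.cons s path) - V s) ^ 2)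
      Filter.atTop (nhds (Svar s))) :
    ∀ s, Svar s
      = γ ^ 2 * ((∑ s', P s s' * V s' ^ 2) - (∑ s', P s s' * V s') ^ 2)
        + γ ^ 2 * ∑ s', P s s' * Svar s' := by
  have hPV : ∀ s, P.mulVec V s = ∑ s', P s s' * V s' := by
    intro s; simp [Matrix.mulVec, dotProduct]
  -- key pointwise identity for the deviation along an extended trajectory
  have key : ∀ (n : ℕ) (s s' : S) (g : Fin n → S),
      discReturn γ r (Fin.cons s (Fin.cons s' g)) - V s
        = γ * ((discReturn γ r (Fin.cons s' g) - V s') + (V s' - P.mulVec V s)) := by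
    intro n s s' g
    rw [discReturn_cons, hV s]; ring
  -- recursion for Afun
  have hA_rec : ∀ (n : ℕ) (s : S),
      Afun P γ r V (n + 1) s = γ * ∑ s', P s s' * Afun P γ r V n s' := by
    intro n s
    unfold Afun
    rw [sum_paths_cons]
    have inner : ∀ s' : S,
        ∑ g : Fin n → S, trajWeight P s (Fin.cons s' g)
            * (discReturn γ r (Fin.cons s (Fin.cons s' g)) - V s)
        = γ * (P s s' * Afun P γ r V n s')
            + γ * (P s s' * V s' - P s s' * P.mulVec V s) := by
      intro s'
      calc ∑ g : Fin n → S, trajWeight P s (Fin.cons s' g)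
              * (discReturn γ r (Fin.cons s (Fin.cons s' g)) - V s)
          = ∑ g : Fin n → S,
              ((γ * P s s') * (trajWeight P s' g * (discReturn γ r (Fin.cons s' g) - V s'))
                + (γ * P s s' * (V s' - P.mulVec V s)) * trajWeight P s' g) := by
            apply Finset.sum_congr rfl
            intro g _
            rw [trajWeight_cons, key n s s' g]; ring
        _ = (γ * P s s') * ∑ g : Fin n → S,
                trajWeight P s' g * (discReturn γ r (Fin.cons s' g) - V s')
              + (γ * P s s' * (V s' - P.mulVec V s))
                * ∑ g : Fin n → S, trajWeight P s' g := by
            rw [Finset.sum_add_distrib, ← Finset.mul_sum, ← Finset.mul_sum]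
        _ = γ * (P s s' * Afun P γ r V n s')
              + γ * (P s s' * V s' - P s s' * P.mulVec V s) := by
            rw [trajWeight_sum P hP1]; unfold Afun; ring
    calc ∑ s' : S, ∑ g : Fin n → S, trajWeight P s (Fin.cons s' g)
            * (discReturn γ r (Fin.cons s (Fin.cons s' g)) - V s)
        = ∑ s' : S, (γ * (P s s' * Afun P γ r V n s')
            + γ * (P s s' * V s' - P s s' * P.mulVec V s)) :=
          Finset.sum_congr rfl fun s' _ => inner s'
      _ = γ * ∑ s', P s s' * Afun P γ r V n s' := by
          rw [Finset.sum_add_distrib, ← Finset.mul_sum, ← Finset.mul_sum,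
            Finset.sum_sub_distrib, ← Finset.sum_mul, hP1 s, ← hPV s]
          ring
  -- bound on Afun
  have hC : ∀ s : S, |P.mulVec V s| ≤ ∑ s'' : S, |P.mulVec V s''| := fun s =>
    Finset.single_le_sum (f := fun s'' => |P.mulVec V s''|) (fun i _ => abs_nonneg _) (Finset.mem_univ s)
  set C : ℝ := ∑ s'' : S, |P.mulVec V s''| with hCdef
  have hA0 : ∀ s : S, Afun P γ r V 0 s = -(γ * P.mulVec V s) := by
    intro s
    have : V s = r s + γ * P.mulVec V s := hV s
    simp [Afun, trajWeight, discReturn, this]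
  have hA_bound : ∀ (n : ℕ) (s : S), |Afun P γ r V n s| ≤ γ ^ (n + 1) * C := by
    intro n
    induction n with
    | zero =>
      intro s
      rw [hA0 s, abs_neg, abs_mul, abs_of_pos hγ0, pow_one]
      exact mul_le_mul_of_nonneg_left (hC s) hγ0.le
    | succ n ih =>
      intro s
      rw [hA_rec n s, abs_mul, abs_of_pos hγ0]
      calc γ * |∑ s', P s s' * Afun P γ r V n s'|
          ≤ γ * ∑ s', |P s s' * Afun P γ r V n s'| :=
            mul_le_mul_of_nonneg_left (Finset.abs_sum_le_sum_abs _ _) hγ0.le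
        _ ≤ γ * ∑ s', P s s' * (γ ^ (n + 1) * C) := by
            apply mul_le_mul_of_nonneg_left _ hγ0.le
            apply Finset.sum_le_sum
            intro i _
            rw [abs_mul, abs_of_nonneg (hP0 s i)]
            exact mul_le_mul_of_nonneg_left (ih i) (hP0 s i)
        _ = γ ^ (n + 1 + 1) * C := by
            rw [← Finset.sum_mul, hP1 s]; ring
  have hA_tendsto : ∀ s : S, Filter.Tendsto (fun n => Afun P γ r V n s)
      Filter.atTop (nhds 0) := by
    intro s
    apply squeeze_zero_norm (fun n => (Real.norm_eq_abs _) ▸ hA_bound n s)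
    have h1 : Filter.Tendsto (fun n : ℕ => γ ^ (n + 1)) Filter.atTop (nhds 0) :=
      (tendsto_pow_atTop_nhds_zero_of_lt_one hγ0.le hγ1).comp
        (Filter.tendsto_add_atTop_nat 1)
    simpa using h1.mul_const C
  -- recursion for Mfun
  have hM_rec : ∀ (n : ℕ) (s : S),
      Mfun P γ r V (n + 1) s = γ ^ 2 * ∑ s', P s s' *
        (Mfun P γ r V n s' + 2 * (V s' - P.mulVec V s) * Afun P γ r V n s'
          + (V s' - P.mulVec V s) ^ 2) := by
    intro n s
    unfold Mfun
    rw [sum_paths_cons, Finset.mul_sum]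
    apply Finset.sum_congr rfl
    intro s' _
    calc ∑ g : Fin n → S, trajWeight P s (Fin.cons s' g)
            * (discReturn γ r (Fin.cons s (Fin.cons s' g)) - V s) ^ 2
        = ∑ g : Fin n → S,
            ((γ ^ 2 * P s s') * (trajWeight P s' g
                * (discReturn γ r (Fin.cons s' g) - V s') ^ 2)
              + (γ ^ 2 * P s s' * (2 * (V s' - P.mulVec V s)))
                * (trajWeight P s' g * (discReturn γ r (Fin.cons s' g) - V s'))
              + (γ ^ 2 * P s s' * (V s' - P.mulVec V s) ^ 2) * trajWeight P s' g) := by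
          apply Finset.sum_congr rfl
          intro g _
          rw [trajWeight_cons, key n s s' g]; ring
      _ = (γ ^ 2 * P s s') * ∑ g : Fin n → S, trajWeight P s' g
              * (discReturn γ r (Fin.cons s' g) - V s') ^ 2
            + (γ ^ 2 * P s s' * (2 * (V s' - P.mulVec V s)))
              * ∑ g : Fin n → S, trajWeight P s' g
                * (discReturn γ r (Fin.cons s' g) - V s')
            + (γ ^ 2 * P s s' * (V s' - P.mulVec V s) ^ 2)
              * ∑ g : Fin n → S, trajWeight P s' g := by
          rw [Finset.sum_add_distrib, Finset.sum_add_distrib,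
            ← Finset.mul_sum, ← Finset.mul_sum, ← Finset.mul_sum]
      _ = γ ^ 2 * (P s s' * (Mfun P γ r V n s'
            + 2 * (V s' - P.mulVec V s) * Afun P γ r V n s'
            + (V s' - P.mulVec V s) ^ 2)) := by
          rw [trajWeight_sum P hP1]; unfold Mfun Afun; ring
  -- pass to the limit
  intro s
  have h1 : Filter.Tendsto (fun n : ℕ => Mfun P γ r V (n + 1) s)
      Filter.atTop (nhds (Svar s)) := (hSvar s).comp (Filter.tendsto_add_atTop_nat 1)
  have h1' : Filter.Tendsto (fun n : ℕ => γ ^ 2 * ∑ s', P s s' *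
      (Mfun P γ r V n s' + 2 * (V s' - P.mulVec V s) * Afun P γ r V n s'
        + (V s' - P.mulVec V s) ^ 2)) Filter.atTop (nhds (Svar s)) :=
    h1.congr fun n => hM_rec n s
  have h2 : Filter.Tendsto (fun n : ℕ => γ ^ 2 * ∑ s', P s s' *
      (Mfun P γ r V n s' + 2 * (V s' - P.mulVec V s) * Afun P γ r V n s'
        + (V s' - P.mulVec V s) ^ 2)) Filter.atTop
      (nhds (γ ^ 2 * ∑ s', P s s' *
        (Svar s' + 2 * (V s' - P.mulVec V s) * 0 + (V s' - P.mulVec V s) ^ 2))) := by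
    apply Filter.Tendsto.const_mul
    apply tendsto_finset_sum
    intro s' _
    exact (((hSvar s').add ((hA_tendsto s').const_mul _)).add tendsto_const_nhds).const_mul _
  have heq : Svar s = γ ^ 2 * ∑ s', P s s' *
      (Svar s' + 2 * (V s' - P.mulVec V s) * 0 + (V s' - P.mulVec V s) ^ 2) :=
    tendsto_nhds_unique h1' h2
  rw [heq]
  have expand : ∀ s' : S,
      P s s' * (Svar s' + 2 * (V s' - P.mulVec V s) * 0 + (V s' - P.mulVec V s) ^ 2)
      = P s s' * Svar s' + P s s' * V s' ^ 2
        - (2 * P.mulVec V s) * (P s s' * V s')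
        + (P.mulVec V s) ^ 2 * P s s' := by
    intro s'; ring
  rw [Finset.sum_congr rfl fun s' _ => expand s', Finset.sum_add_distrib,
    Finset.sum_sub_distrib, Finset.sum_add_distrib, ← Finset.mul_sum, ← Finset.mul_sum,
    hP1 s, ← hPV s]
  ring
end

section
/- Total variance bound: for any stationary policy π in a discounted MDP with costs plus regularizer bounded in [0, 1+h̄], ‖(I − γP_π)^{-1} √(σ^π_{V^π})‖_∞² ≤ (1+h̄)²(1+γ) / (γ²(1−γ)³), where σ^π_{V^π} = P_π (V^π)² − (P_π V^π)² is the one-step variance vector and the square root is entrywise. -/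
/-! Write `N = ∑ᵢ (γP)ⁱ = (I - γP)⁻¹` and `σ` for the one-step variance. Cauchy–Schwarz along the
rows of the nonnegative matrix `N`, whose row sums are at most `1/(1-γ)`, gives
`(N √σ)² ≤ Nσ / (1-γ)`. With `R = (1+h̄)/(1-γ)`, the function `W = R V - V²` satisfies
`γσ + γPW ≤ W` because the second moments `P V²` cancel, and the maximum principle for
`x ≤ γPx` then yields `γ Nσ ≤ W ≤ R²/4`. -/

open Matrix Finset

namespace Matrix

variable {m n : Type*} [Fintype n]

lemma mulVec_mono_of_nonneg {A : Matrix m n ℝ} (hA : ∀ i j, 0 ≤ A i j) {f g : n → ℝ}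
    (hfg : f ≤ g) : A *ᵥ f ≤ A *ᵥ g :=
  fun i => dotProduct_le_dotProduct_of_nonneg_left hfg (hA i)

lemma sq_mulVec_le_mulVec_one_mul_mulVec_sq {A : Matrix m n ℝ} (hA : ∀ i j, 0 ≤ A i j)
    (f : n → ℝ) (i : m) : (A *ᵥ f) i ^ 2 ≤ (A *ᵥ 1) i * (A *ᵥ f ^ 2) i := by
  simp only [mulVec, dotProduct, Pi.one_apply, Pi.pow_apply]
  exact sum_sq_le_sum_mul_sum_of_sq_le_mul _ (fun j _ => by simpa using hA i j)
    (fun j _ => mul_nonneg (hA i j) (sq_nonneg _)) (fun j _ => by ring_nf; rfl)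

end Matrix

lemma sq_norm_le_of_forall_sq_le {ι : Type*} [Fintype ι] {x : ι → ℝ} {B : ℝ} (hB : 0 ≤ B)
    (h : ∀ i, x i ^ 2 ≤ B) : ‖x‖ ^ 2 ≤ B := by
  have : ‖x‖ ≤ √B := (pi_norm_le_iff_of_nonneg (Real.sqrt_nonneg B)).mpr fun i =>
    Real.le_sqrt_of_sq_le (by simpa using h i)
  simpa [Real.sq_sqrt hB] using pow_le_pow_left₀ (norm_nonneg x) this 2

section Resolvent

variable {S : Type*} [Fintype S] [DecidableEq S] {γ : ℝ} {P : Matrix S S ℝ}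

lemma nonpos_of_le_smul_mulVec (hP : P ∈ rowStochastic ℝ S) (hγ0 : 0 ≤ γ) (hγ1 : γ < 1)
    {z : S → ℝ} (hz : z ≤ γ • (P *ᵥ z)) : z ≤ 0 := by
  rcases isEmpty_or_nonempty S with hS | hS
  · exact fun s => isEmptyElim s
  obtain ⟨s₀, hs₀⟩ := Finite.exists_max z
  have hPz : (P *ᵥ z) s₀ ≤ z s₀ := by
    have := mulVec_mono_of_nonneg hP.1 (show z ≤ z s₀ • 1 from fun s => by simpa using hs₀ s) s₀
    simpa [mulVec_smul, one_vecMul_of_mem_rowStochastic hP] using this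
  have hz₀ : z s₀ ≤ 0 := by
    have := hz s₀
    simp only [Pi.smul_apply, smul_eq_mul] at this
    nlinarith
  exact fun s => (hs₀ s).trans hz₀

lemma le_of_le_add_smul_mulVec (hP : P ∈ rowStochastic ℝ S) (hγ0 : 0 ≤ γ) (hγ1 : γ < 1)
    {v x y : S → ℝ} (hx : x ≤ v + γ • (P *ᵥ x)) (hy : v + γ • (P *ᵥ y) ≤ y) : x ≤ y := by
  have := nonpos_of_le_smul_mulVec hP hγ0 hγ1 (z := x - y) fun s => by
    have := hx s
    have := hy s
    simp only [mulVec_sub, Pi.add_apply, Pi.sub_apply, Pi.smul_apply, smul_eq_mul] at *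
    linarith
  exact fun s => sub_nonpos.mp (this s)

lemma summable_smul_pow (hP : P ∈ rowStochastic ℝ S) (hγ0 : 0 ≤ γ) (hγ1 : γ < 1) :
    Summable fun i : ℕ => (γ • P) ^ i := by
  refine Pi.summable.mpr fun s => Pi.summable.mpr fun t => ?_
  refine (summable_geometric_of_lt_one hγ0 hγ1).of_nonneg_of_le (fun i => ?_) (fun i => ?_)
  · rw [smul_pow]
    exact mul_nonneg (pow_nonneg hγ0 i) (nonneg_of_mem_rowStochastic (pow_mem hP i))
  · rw [smul_pow]
    exact mul_le_of_le_one_right (pow_nonneg hγ0 i) (le_one_of_mem_rowStochastic (pow_mem hP i))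

variable (γ P) in
noncomputable def discountResolvent : Matrix S S ℝ :=
  ∑' i : ℕ, (γ • P) ^ i

lemma discountResolvent_eq_one_add (hP : P ∈ rowStochastic ℝ S) (hγ0 : 0 ≤ γ) (hγ1 : γ < 1) :
    discountResolvent γ P = 1 + γ • P * discountResolvent γ P := by
  have h := summable_smul_pow hP hγ0 hγ1
  conv_lhs => rw [discountResolvent, h.tsum_eq_zero_add, pow_zero]
  simp_rw [pow_succ', h.tsum_mul_left]
  rfl

lemma discountResolvent_mulVec (hP : P ∈ rowStochastic ℝ S) (hγ0 : 0 ≤ γ) (hγ1 : γ < 1)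
    (f : S → ℝ) :
    discountResolvent γ P *ᵥ f = f + γ • (P *ᵥ (discountResolvent γ P *ᵥ f)) := by
  conv_lhs => rw [discountResolvent_eq_one_add hP hγ0 hγ1]
  rw [add_mulVec, one_mulVec, smul_mul_assoc, smul_mulVec, mulVec_mulVec]

lemma discountResolvent_nonneg (hP : P ∈ rowStochastic ℝ S) (hγ0 : 0 ≤ γ) (hγ1 : γ < 1)
    (s t : S) : 0 ≤ discountResolvent γ P s t := by
  refine (Pi.hasSum.mp (Pi.hasSum.mp (summable_smul_pow hP hγ0 hγ1).hasSum s) t).nonneg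
    fun i => ?_
  rw [smul_pow]
  exact mul_nonneg (pow_nonneg hγ0 i) (nonneg_of_mem_rowStochastic (pow_mem hP i))

lemma discountResolvent_mulVec_one_le (hP : P ∈ rowStochastic ℝ S) (hγ0 : 0 ≤ γ)
    (hγ1 : γ < 1) : discountResolvent γ P *ᵥ 1 ≤ (1 - γ)⁻¹ • 1 := by
  refine le_of_le_add_smul_mulVec hP hγ0 hγ1 (discountResolvent_mulVec hP hγ0 hγ1 1).le
    fun s => ?_
  have : 1 + γ * (1 - γ)⁻¹ = (1 - γ)⁻¹ := by
    field_simp [show 1 - γ ≠ 0 by linarith]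
    ring
  simp [mulVec_smul, one_vecMul_of_mem_rowStochastic hP, this]

lemma sq_discountResolvent_mulVec_sqrt_le (hP : P ∈ rowStochastic ℝ S) (hγ0 : 0 ≤ γ)
    (hγ1 : γ < 1) {v : S → ℝ} (hv : 0 ≤ v) (s : S) :
    (discountResolvent γ P *ᵥ fun t => √(v t)) s ^ 2
      ≤ (1 - γ)⁻¹ * (discountResolvent γ P *ᵥ v) s := by
  have hN := discountResolvent_nonneg hP hγ0 hγ1
  have hsq : (fun t => √(v t)) ^ 2 = v := funext fun t => Real.sq_sqrt (hv t)
  calc _ ≤ (discountResolvent γ P *ᵥ 1) s * (discountResolvent γ P *ᵥ v) s := by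
        simpa only [hsq] using sq_mulVec_le_mulVec_one_mul_mulVec_sq hN (fun t => √(v t)) s
    _ ≤ (1 - γ)⁻¹ * (discountResolvent γ P *ᵥ v) s := by
        refine mul_le_mul_of_nonneg_right ?_ (dotProduct_nonneg_of_nonneg (hN s) hv)
        simpa using discountResolvent_mulVec_one_le hP hγ0 hγ1 s

end Resolvent

section Variance

variable {S : Type*} [Fintype S]

def stepVariance (P : Matrix S S ℝ) (V : S → ℝ) : S → ℝ := P *ᵥ V ^ 2 - (P *ᵥ V) ^ 2

variable {P : Matrix S S ℝ}

lemma stepVariance_nonneg (hP : ∀ s t, 0 ≤ P s t) (hP1 : P *ᵥ 1 = 1) (V : S → ℝ) :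
    0 ≤ stepVariance P V := fun s => by
  have := sq_mulVec_le_mulVec_one_mul_mulVec_sq hP V s
  simp only [hP1, Pi.one_apply, one_mul] at this
  simpa [stepVariance] using this

lemma mul_sub_sq_le_of_mem_Icc {γ m r y : ℝ} (hγ0 : 0 ≤ γ) (hγ1 : γ < 1)
    (hr : r ∈ Set.Icc 0 m) :
    γ * (m / (1 - γ) * y - y ^ 2) ≤ m / (1 - γ) * (r + γ * y) - (r + γ * y) ^ 2 := by
  have h1γ : 0 < 1 - γ := by linarith
  have key : m / (1 - γ) * (r + γ * y) - (r + γ * y) ^ 2 - γ * (m / (1 - γ) * y - y ^ 2)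
      = (γ * ((1 - γ) * y - r) ^ 2 + r * (m - r)) / (1 - γ) := by
    field_simp
    ring
  have : 0 ≤ (γ * ((1 - γ) * y - r) ^ 2 + r * (m - r)) / (1 - γ) := by
    have := mul_nonneg hr.1 (sub_nonneg.mpr hr.2)
    positivity
  linarith

lemma smul_stepVariance_add_le {γ m : ℝ} (hγ0 : 0 ≤ γ) (hγ1 : γ < 1) {r V : S → ℝ}
    (hr : ∀ s, r s ∈ Set.Icc 0 m) (hV : V = r + γ • (P *ᵥ V)) :
    γ • stepVariance P V + γ • (P *ᵥ ((m / (1 - γ)) • V - V ^ 2))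
      ≤ (m / (1 - γ)) • V - V ^ 2 := fun s => by
  have key := mul_sub_sq_le_of_mem_Icc (y := (P *ᵥ V) s) hγ0 hγ1 (hr s)
  rw [← show V s = r s + γ * (P *ᵥ V) s from congrFun hV s] at key
  simp only [stepVariance, mulVec_sub, mulVec_smul, Pi.add_apply, Pi.sub_apply, Pi.smul_apply,
    Pi.pow_apply, smul_eq_mul]
  linarith

end Variance

theorem total_variance_bound_general
    {S : Type*} [Fintype S] [DecidableEq S]
    (γ : ℝ) (hγ0 : 0 < γ) (hγ1 : γ < 1)
    (hbar : ℝ)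
    (P : Matrix S S ℝ)
    (hP0 : ∀ s s', 0 ≤ P s s') (hP1 : ∀ s, ∑ s', P s s' = 1)
    (r : S → ℝ) (hr : ∀ s, r s ∈ Set.Icc (0 : ℝ) (1 + hbar))
    (V : S → ℝ) (hV : ∀ s, V s = r s + γ * P.mulVec V s) :
    ‖(∑' i : ℕ, (γ • P) ^ i).mulVec
        (fun s => Real.sqrt ((∑ s', P s s' * V s' ^ 2) - (∑ s', P s s' * V s') ^ 2))‖ ^ 2
      ≤ (1 + hbar) ^ 2 * (1 + γ) / (γ ^ 2 * (1 - γ) ^ 3) := by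
  have hP : P ∈ rowStochastic ℝ S := mem_rowStochastic_iff_sum.mpr ⟨hP0, hP1⟩
  set R := (1 + hbar) / (1 - γ)
  set N := discountResolvent γ P
  set σ := stepVariance P V
  have hNσ : γ • (N *ᵥ σ) ≤ R • V - V ^ 2 := by
    refine le_of_le_add_smul_mulVec hP hγ0.le hγ1 (v := γ • σ) (le_of_eq ?_)
      (smul_stepVariance_add_le hγ0.le hγ1 hr (funext hV))
    conv_lhs => rw [discountResolvent_mulVec hP hγ0.le hγ1]
    rw [smul_add, mulVec_smul]
  refine sq_norm_le_of_forall_sq_le (by positivity) fun s => ?_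
  calc (N *ᵥ fun t => √(σ t)) s ^ 2 ≤ (1 - γ)⁻¹ * (N *ᵥ σ) s :=
        sq_discountResolvent_mulVec_sqrt_le hP hγ0.le hγ1 (stepVariance_nonneg hP0 hP.2 V) s
    _ ≤ (1 - γ)⁻¹ * (R ^ 2 / (4 * γ)) := by
        gcongr
        have := hNσ s
        simp only [Pi.smul_apply, Pi.sub_apply, Pi.pow_apply, smul_eq_mul] at this
        rw [le_div_iff₀ (by positivity)]
        nlinarith [sq_nonneg (R - 2 * V s)]
    _ ≤ (1 + hbar) ^ 2 * (1 + γ) / (γ ^ 2 * (1 - γ) ^ 3) := by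
        have h1γ : 0 < 1 - γ := by linarith
        rw [show R = (1 + hbar) / (1 - γ) from rfl]
        field_simp
        nlinarith [sq_nonneg (1 + hbar)]

/-- Total variance bound. For any stationary policy in a discounted MDP
whose per-step cost-plus-regularizer `r` lies in `[0, 1+h̄]`, the value function `V^π`
(fixed point of `V = r + γP_πV`) satisfies
`‖(I − γP_π)⁻¹ √(σ^π_{V^π})‖_∞² ≤ (1+h̄)²(1+γ)/(γ²(1−γ)³)`, where
`σ^π_{V^π} = P_π (V^π)² − (P_π V^π)²` and `(I − γP_π)⁻¹ = ∑_i (γP_π)^i`. -/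
theorem total_variance_bound
    {S : Type*} [Fintype S] [DecidableEq S]
    (γ : ℝ) (hγ0 : 0 < γ) (hγ1 : γ < 1)
    (hbar : ℝ) (hhbar : 0 ≤ hbar)
    (P : Matrix S S ℝ)
    (hP0 : ∀ s s', 0 ≤ P s s') (hP1 : ∀ s, ∑ s', P s s' = 1)
    (r : S → ℝ) (hr : ∀ s, r s ∈ Set.Icc (0 : ℝ) (1 + hbar))
    (V : S → ℝ) (hV : ∀ s, V s = r s + γ * P.mulVec V s) :
    ‖(∑' i : ℕ, (γ • P) ^ i).mulVec
        (fun s => Real.sqrt ((∑ s', P s s' * V s' ^ 2) - (∑ s', P s s' * V s') ^ 2))‖ ^ 2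
      ≤ (1 + hbar) ^ 2 * (1 + γ) / (γ ^ 2 * (1 - γ) ^ 3) :=
  total_variance_bound_general γ hγ0 hγ1 hbar P hP0 hP1 r hr V hV
end

section
/- Auxiliary norm inequality: for any row-stochastic matrix P ∈ ℝ^{|S|×|S|}, γ ∈ (0,1), and nonnegative vector v ∈ ℝ^{|S|}, ‖(I − γP)^{-1} √v‖_∞² ≤ ((1+γ)/(1−γ)) · ‖(I − γ²P)^{-1} v‖_∞, where √v is the entrywise square root. -/
/-!
Write `x = ∑ γⁱ Pⁱ √v` and `u = ∑ γ²ⁱ Pⁱ v`, so that `x = √v + γ P x` and `u = v + γ² P u`.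
With `M = ‖u‖_∞`, the function `y = (1 - γ) x² - u` satisfies `y ≤ γ P y + γ (1 - γ) M`: this uses
`(1 - γ)(a + γ b)² ≤ a² + γ (1 - γ) b²` and Jensen's inequality `(P x)² ≤ P (x²)`.
At a maximum of `y` this gives `y ≤ γ M`, hence `(1 - γ) x² ≤ u + γ M ≤ (1 + γ) M`.
-/

open Matrix

namespace Matrix

variable {S : Type*} [Fintype S] [DecidableEq S] {P : Matrix S S ℝ}

section LinftyOp

attribute [local instance] Matrix.linftyOpNormedRing Matrix.linftyOpNormedAlgebra

theorem linfty_opNorm_le_one_of_mem_rowStochastic (hP : P ∈ rowStochastic ℝ S) : ‖P‖ ≤ 1 := by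
  rw [linfty_opNorm_def, NNReal.coe_le_one, Finset.sup_le_iff]
  intro s _
  rw [← NNReal.coe_le_one]
  push_cast
  simp [Real.norm_of_nonneg (nonneg_of_mem_rowStochastic hP), sum_row_of_mem_rowStochastic hP]

theorem tsum_smul_pow_eq_one_add_of_mem_rowStochastic (hP : P ∈ rowStochastic ℝ S)
    {c : ℝ} (hc0 : 0 ≤ c) (hc1 : c < 1) :
    ∑' i : ℕ, (c • P) ^ i = 1 + c • P * ∑' i : ℕ, (c • P) ^ i := by
  have hnorm : ‖c • P‖ < 1 :=
    calc ‖c • P‖ ≤ ‖c‖ * ‖P‖ := norm_smul_le c P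
      _ ≤ c * 1 := by
        rw [Real.norm_of_nonneg hc0]
        exact mul_le_mul_of_nonneg_left (linfty_opNorm_le_one_of_mem_rowStochastic hP) hc0
      _ < 1 := by linarith
  have h := mul_neg_geom_series (c • P) hnorm
  rwa [sub_mul, one_mul, sub_eq_iff_eq_add] at h

end LinftyOp

theorem tsum_smul_pow_mulVec_eq_of_mem_rowStochastic (hP : P ∈ rowStochastic ℝ S)
    {c : ℝ} (hc0 : 0 ≤ c) (hc1 : c < 1) (w : S → ℝ) (s : S) :
    ((∑' i : ℕ, (c • P) ^ i) *ᵥ w) s = w s + c * (P *ᵥ ((∑' i : ℕ, (c • P) ^ i) *ᵥ w)) s := by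
  conv_lhs => rw [tsum_smul_pow_eq_one_add_of_mem_rowStochastic hP hc0 hc1]
  rw [add_mulVec, one_mulVec, ← mulVec_mulVec, smul_mulVec, Pi.add_apply, Pi.smul_apply,
    smul_eq_mul]

theorem mulVec_apply_le_of_mem_rowStochastic (hP : P ∈ rowStochastic ℝ S) {x : S → ℝ} {C : ℝ}
    (hx : ∀ s, x s ≤ C) (s : S) : (P *ᵥ x) s ≤ C :=
  calc (P *ᵥ x) s = ∑ s', P s s' * x s' := rfl
    _ ≤ ∑ s', P s s' * C :=
      Finset.sum_le_sum fun s' _ => mul_le_mul_of_nonneg_left (hx s') (hP.1 s s')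
    _ = C := by rw [← Finset.sum_mul, sum_row_of_mem_rowStochastic hP, one_mul]

theorem sq_mulVec_apply_le_of_mem_rowStochastic (hP : P ∈ rowStochastic ℝ S) (x : S → ℝ)
    (s : S) : (P *ᵥ x) s ^ 2 ≤ (P *ᵥ fun s' => x s' ^ 2) s :=
  (even_two.convexOn_pow (𝕜 := ℝ)).map_sum_le (p := x) (fun s' _ => hP.1 s s')
    (sum_row_of_mem_rowStochastic hP s) fun _ _ => Set.mem_univ _

/-- A discrete maximum principle for the operator `γ P`. -/
theorem one_sub_mul_le_of_le_smul_mulVec_add (hP : P ∈ rowStochastic ℝ S) {γ b : ℝ}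
    (hγ0 : 0 ≤ γ) (hγ1 : γ < 1) {y : S → ℝ} (hy : ∀ s, y s ≤ γ * (P *ᵥ y) s + b) (s : S) :
    (1 - γ) * y s ≤ b := by
  have : Nonempty S := ⟨s⟩
  obtain ⟨s₀, hs₀⟩ := Finite.exists_max y
  have hPy := mulVec_apply_le_of_mem_rowStochastic hP hs₀ s₀
  nlinarith [hy s₀, hs₀ s, mul_le_mul_of_nonneg_left hPy hγ0]

theorem one_sub_mul_sq_le_add_of_fixedPoints (hP : P ∈ rowStochastic ℝ S) {γ M : ℝ}
    (hγ0 : 0 ≤ γ) (hγ1 : γ < 1) {w x u : S → ℝ}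
    (hx : ∀ s, x s = w s + γ * (P *ᵥ x) s)
    (hu : ∀ s, u s = w s ^ 2 + γ ^ 2 * (P *ᵥ u) s) (huM : ∀ s, u s ≤ M) (s : S) :
    (1 - γ) * x s ^ 2 ≤ u s + γ * M := by
  let y : S → ℝ := (1 - γ) • (fun s' => x s' ^ 2) - u
  have hPy : ∀ s, (P *ᵥ y) s = (1 - γ) * (P *ᵥ fun s' => x s' ^ 2) s - (P *ᵥ u) s := fun s => by
    rw [mulVec_sub, mulVec_smul]
    rfl
  have hstep : ∀ s, y s ≤ γ * (P *ᵥ y) s + γ * (1 - γ) * M := by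
    intro s
    have hsq : (1 - γ) * (w s + γ * (P *ᵥ x) s) ^ 2
        ≤ w s ^ 2 + γ * (1 - γ) * (P *ᵥ x) s ^ 2 := by
      nlinarith [mul_nonneg hγ0 (sq_nonneg (w s - (1 - γ) * (P *ᵥ x) s))]
    have hJensen := mul_le_mul_of_nonneg_left (sq_mulVec_apply_le_of_mem_rowStochastic hP x s)
      (mul_nonneg hγ0 (sub_nonneg.2 hγ1.le))
    have hPu := mul_le_mul_of_nonneg_left (mulVec_apply_le_of_mem_rowStochastic hP huM s)
      (mul_nonneg hγ0 (sub_nonneg.2 hγ1.le))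
    show (1 - γ) * x s ^ 2 - u s ≤ _
    rw [hPy, hu s, hx s]
    nlinarith
  have hy := one_sub_mul_le_of_le_smul_mulVec_add hP hγ0 hγ1 hstep s
  have h1γ : 0 < 1 - γ := sub_pos.2 hγ1
  change (1 - γ) * ((1 - γ) * x s ^ 2 - u s) ≤ γ * (1 - γ) * M at hy
  nlinarith

end Matrix

theorem sq_norm_le_of_forall_sq_le_s17 {S : Type*} [Fintype S] {x : S → ℝ} {R : ℝ} (hR : 0 ≤ R)
    (hx : ∀ s, x s ^ 2 ≤ R) : ‖x‖ ^ 2 ≤ R := by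
  have : ‖x‖ ≤ √R :=
    (pi_norm_le_iff_of_nonneg (Real.sqrt_nonneg R)).2 fun s => Real.abs_le_sqrt (hx s)
  calc ‖x‖ ^ 2 ≤ √R ^ 2 := pow_le_pow_left₀ (norm_nonneg x) this 2
    _ = R := Real.sq_sqrt hR

/-- Auxiliary norm inequality. For a row-stochastic matrix `P`,
`γ ∈ (0,1)` and a nonnegative vector `v`,
`‖(I − γP)⁻¹ √v‖_∞² ≤ ((1+γ)/(1−γ)) ‖(I − γ²P)⁻¹ v‖_∞`, where the inverses are the
Neumann series `∑_i (γP)^i` and `∑_i (γ²P)^i` and `√v` is the entrywise square root. -/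
theorem neumann_sqrt_norm_inequality
    {S : Type*} [Fintype S] [DecidableEq S]
    (γ : ℝ) (hγ0 : 0 < γ) (hγ1 : γ < 1)
    (P : Matrix S S ℝ)
    (hP0 : ∀ s s', 0 ≤ P s s') (hP1 : ∀ s, ∑ s', P s s' = 1)
    (v : S → ℝ) (hv : ∀ s, 0 ≤ v s) :
    ‖(∑' i : ℕ, (γ • P) ^ i).mulVec (fun s => Real.sqrt (v s))‖ ^ 2
      ≤ ((1 + γ) / (1 - γ)) * ‖(∑' i : ℕ, ((γ ^ 2) • P) ^ i).mulVec v‖ := by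
  have hP : P ∈ rowStochastic ℝ S := mem_rowStochastic_iff_sum.2 ⟨hP0, hP1⟩
  set u := (∑' i : ℕ, ((γ ^ 2) • P) ^ i).mulVec v
  set M := ‖u‖
  have hγ1' : 0 < 1 - γ := sub_pos.2 hγ1
  have huM : ∀ s, u s ≤ M := fun s => (le_abs_self _).trans (norm_le_pi_norm u s)
  have hu : ∀ s, u s = Real.sqrt (v s) ^ 2 + γ ^ 2 * (P *ᵥ u) s := fun s => by
    rw [Real.sq_sqrt (hv s)]
    exact tsum_smul_pow_mulVec_eq_of_mem_rowStochastic hP (sq_nonneg γ)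
      (by nlinarith) v s
  refine sq_norm_le_of_forall_sq_le_s17 (by positivity) fun s => ?_
  rw [div_mul_eq_mul_div, le_div_iff₀ hγ1', mul_comm]
  have := one_sub_mul_sq_le_add_of_fixedPoints hP hγ0.le hγ1
    (tsum_smul_pow_mulVec_eq_of_mem_rowStochastic hP hγ0.le hγ1 _) hu huM s
  linarith [huM s]
end

section
/- Strongly convex single-epoch recursion: in stochastic value mirror descent with stepsizes η_t = 2/(μ(t+1)) and auxiliary proxy values V̄_t satisfying V̄_{t+1}(s) ≤ ⟨c(s,·)+γP_sV̄_t, π_{t+1}(·|s)⟩ + h(π_{t+1}(·|s)), the following holds componentwise: (V̄_T − V*) + ∑_{t=1}^{T-1}(I − γP_{π*})(V̄_t − V*) + (μ(T+2)/2) D_{π_T}^{π*} ≤ μ D_{π_0}^{π*} + γP_{π*}(V̄_0 − V*) + (2/μ) ∑_{t=0}^{T-1} ‖Q̃^t − Q̄^t‖_max² · 1, where Q̃^t(s,·) = c(s,·)+γP̃_s^t V_t and Q̄^t(s,·) = c(s,·)+γP_s V̄_t. -/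
/-!
At a fixed state, the three-point inequality at `p = π*` bounds the linearization gap
`⟨Q̄ᵗ, π_{t+1} - π*⟩ + h(π_{t+1}) - h(π*)`, which by the proxy inequality and the Bellman equation
for `V*` dominates `(V̄_{t+1} - V*) - γ P_{π*} (V̄_t - V*)`. The error `Q̃ᵗ - Q̄ᵗ` is paired with
`π_{t+1} - π_t` and `π_t - π*` and absorbed, by Hölder and Young, into `D(π_t, π_{t+1})` and
`(μ/2) D(π_t, π*)` at the price `(2/μ) ‖Q̃ᵗ - Q̄ᵗ‖²_max`. With `η_t = 2/(μ(t+1))` the remaining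
weights are `μ(t+2)/2` on `D(π_t, π*)` and `μ(t+3)/2` on `D(π_{t+1}, π*)`, so the per-step bounds
telescope.
-/

open Finset

theorem abs_sum_mul_le_mul_sum_abs {ι : Type*} (s : Finset ι) {δ x : ι → ℝ} {N : ℝ}
    (hδ : ∀ i ∈ s, |δ i| ≤ N) : |∑ i ∈ s, δ i * x i| ≤ N * ∑ i ∈ s, |x i| := by
  rw [mul_sum]
  refine (abs_sum_le_sum_abs _ _).trans (sum_le_sum fun i hi => ?_)
  rw [abs_mul]
  exact mul_le_mul_of_nonneg_right (hδ i hi) (abs_nonneg _)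

theorem linearization_gap_le {A : Type*} [Fintype A] {μ η N h₁ hₛ D₀₁ D₀ D₁ : ℝ}
    {q q' p₀ p₁ pₛ : A → ℝ} (hμ : 0 < μ) (hη : 0 < η) (hημ : η ≤ 2 / μ)
    (hq : ∀ a, |q' a - q a| ≤ N)
    (hD₀₁ : (∑ a, |p₀ a - p₁ a|) ^ 2 / 2 ≤ D₀₁) (hD₀ : (∑ a, |p₀ a - pₛ a|) ^ 2 / 2 ≤ D₀)
    (hthree : η * ((∑ a, q' a * (p₁ a - pₛ a)) + h₁ - hₛ) + D₀₁ ≤ D₀ - (1 + η * μ) * D₁) :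
    (∑ a, p₁ a * q a + h₁) - (∑ a, pₛ a * q a + hₛ)
      ≤ (1 / η + μ / 2) * D₀ - (1 / η + μ) * D₁ + 2 / μ * N ^ 2 := by
  set L := ∑ a, |p₀ a - p₁ a|
  set M := ∑ a, |p₀ a - pₛ a|
  set δ := fun a => q' a - q a
  have hsplit : ∑ a, q' a * (p₁ a - pₛ a) = (∑ a, p₁ a * q a - ∑ a, pₛ a * q a)
      - ∑ a, δ a * (p₀ a - p₁ a) + ∑ a, δ a * (p₀ a - pₛ a) := by
    simp only [δ, ← sum_sub_distrib, ← sum_add_distrib]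
    exact sum_congr rfl fun a _ => by ring
  have herr₁ : η * ∑ a, δ a * (p₀ a - p₁ a) ≤ η ^ 2 * N ^ 2 / 2 + D₀₁ := by
    have hH : ∑ a, δ a * (p₀ a - p₁ a) ≤ N * L :=
      (le_abs_self _).trans (abs_sum_mul_le_mul_sum_abs univ fun a _ => hq a)
    linarith [two_mul_le_add_sq (η * N) L, mul_le_mul_of_nonneg_left hH hη.le]
  have herr₂ : -(η * (N ^ 2 / μ + μ / 2 * D₀)) ≤ η * ∑ a, δ a * (p₀ a - pₛ a) := by
    have hH : -(N * M) ≤ ∑ a, δ a * (p₀ a - pₛ a) :=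
      neg_le_of_abs_le (abs_sum_mul_le_mul_sum_abs univ fun a _ => hq a)
    have hY := two_mul_le_add_mul_sq (a := N) (b := M) (div_pos two_pos hμ)
    rw [inv_div, div_mul_eq_mul_div, mul_div_assoc] at hY
    have hNM : N * M ≤ N ^ 2 / μ + μ / 2 * D₀ := by
      linarith [mul_le_mul_of_nonneg_left hD₀ (half_pos hμ).le]
    linarith [mul_le_mul_of_nonneg_left hNM hη.le, mul_le_mul_of_nonneg_left hH hη.le]
  have hN : η ^ 2 * N ^ 2 / 2 ≤ η * (N ^ 2 / μ) := by
    have hη2 : η / 2 ≤ 1 / μ := by rwa [div_le_iff₀ two_pos, one_div_mul_eq_div]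
    calc η ^ 2 * N ^ 2 / 2 = η * (η / 2 * N ^ 2) := by ring
      _ ≤ η * (1 / μ * N ^ 2) := by gcongr
      _ = η * (N ^ 2 / μ) := by ring
  have hgap : η * ((∑ a, p₁ a * q a + h₁) - (∑ a, pₛ a * q a + hₛ))
      ≤ η * ((1 / η + μ / 2) * D₀ - (1 / η + μ) * D₁ + 2 / μ * N ^ 2) := by
    rw [show η * ((1 / η + μ / 2) * D₀ - (1 / η + μ) * D₁ + 2 / μ * N ^ 2)
        = (1 + η * μ / 2) * D₀ - (1 + η * μ) * D₁ + 2 * (η * (N ^ 2 / μ)) by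
      field_simp]
    rw [hsplit] at hthree
    linarith
  exact le_of_mul_le_mul_left hgap hη

theorem Bellman_sub_Bellman {S A : Type*} [Fintype S] [Fintype A] (c : S → A → ℝ)
    (P : S → A → S → ℝ) (h : (A → ℝ) → ℝ) (γ : ℝ) (π : S → A → ℝ) (V W : S → ℝ) (s : S) :
    Bellman c P h γ π V s - Bellman c P h γ π W s
      = γ * ∑ s', (∑ a, π s a * P s a s') * (V s' - W s') := by
  simp only [Bellman, add_sub_add_right_eq_sub, ← sum_sub_distrib, mul_add, add_sub_add_left_eq_sub,
    mul_sum, sum_mul]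
  rw [sum_comm]
  exact sum_congr rfl fun a _ => sum_congr rfl fun s' _ => by ring

theorem sum_range_succ_sub_eq_sum_Ico {G : Type*} [AddCommGroup G] {u g : ℕ → G} {T : ℕ}
    (hT : 1 ≤ T) :
    ∑ t ∈ range T, (u (t + 1) - g t) = u T + ∑ t ∈ Ico 1 T, (u t - g t) - g 0 := by
  induction T, hT using Nat.le_induction with
  | base => simp
  | succ T hT ih =>
    rw [sum_range_succ, ih, sum_Ico_succ_top hT]
    abel

theorem abs_apply_apply_le_norm {S A : Type*} [Fintype S] [Fintype A] (M : S → A → ℝ)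
    (s : S) (a : A) : |M s a| ≤ ‖M‖ :=
  (norm_le_pi_norm (M s) a).trans (norm_le_pi_norm M s)

theorem svmd_strongly_convex_single_epoch_general
    {S A : Type*} [Fintype S] [Fintype A]
    (γ : ℝ)
    (μ : ℝ) (hμ : 0 < μ)
    (c : S → A → ℝ) (P : S → A → S → ℝ)
    (h : (A → ℝ) → ℝ)
    (D : (A → ℝ) → (A → ℝ) → ℝ)
    (hD1 : ∀ x y : A → ℝ, (∑ a, |x a - y a|) ^ 2 / 2 ≤ D x y)
    (T : ℕ) (hT : 1 ≤ T)
    (η : ℕ → ℝ) (hη : ∀ t, η t = 2 / (μ * ((t : ℝ) + 1)))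
    (π : ℕ → S → A → ℝ)
    (Qtil : ℕ → S → A → ℝ)
    (Vbar : ℕ → S → ℝ)
    (hthree : ∀ t < T, ∀ s, ∀ p ∈ stdSimplex ℝ A,
      η t * ((∑ a, Qtil t s a * (π (t + 1) s a - p a)) + h (π (t + 1) s) - h p)
          + D (π t s) (π (t + 1) s)
        ≤ D (π t s) p - (1 + η t * μ) * D (π (t + 1) s) p)
    (hproxy : ∀ t < T, ∀ s,
      Vbar (t + 1) s
        ≤ (∑ a, π (t + 1) s a * (c s a + γ * ∑ s', P s a s' * Vbar t s'))
            + h (π (t + 1) s))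
    (πstar : S → A → ℝ) (hπstar : ∀ s, πstar s ∈ stdSimplex ℝ A)
    (Vstar : S → ℝ) (hVstar : ∀ s, Vstar s = Bellman c P h γ πstar Vstar s) :
    ∀ s,
      (Vbar T s - Vstar s)
        + (∑ t ∈ Finset.Ico 1 T, ((Vbar t s - Vstar s)
            - γ * ∑ s', (∑ a, πstar s a * P s a s') * (Vbar t s' - Vstar s')))
        + (μ * ((T : ℝ) + 2) / 2) * D (π T s) (πstar s)
      ≤ μ * D (π 0 s) (πstar s)
        + γ * ∑ s', (∑ a, πstar s a * P s a s') * (Vbar 0 s' - Vstar s')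
        + (2 / μ) * ∑ t ∈ Finset.range T,
            ‖(fun s a => Qtil t s a - (c s a + γ * ∑ s', P s a s' * Vbar t s')
              : S → A → ℝ)‖ ^ 2 := by
  intro s
  set F : ℕ → ℝ := fun t => μ * ((t : ℝ) + 2) / 2 * D (π t s) (πstar s)
  have step : ∀ t ∈ range T,
      (Vbar (t + 1) s - Vstar s)
          - γ * ∑ s', (∑ a, πstar s a * P s a s') * (Vbar t s' - Vstar s')
        ≤ F t - F (t + 1)
          + 2 / μ * ‖(fun s a => Qtil t s a - (c s a + γ * ∑ s', P s a s' * Vbar t s')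
              : S → A → ℝ)‖ ^ 2 := by
    intro t ht
    rw [mem_range] at ht
    have hηpos : 0 < η t := by rw [hη]; positivity
    have hηle : η t ≤ 2 / μ := by
      rw [hη]
      exact div_le_div_of_nonneg_left zero_le_two hμ
        (le_mul_of_one_le_right hμ.le (le_add_of_nonneg_left t.cast_nonneg))
    have hgap := linearization_gap_le hμ hηpos hηle (abs_apply_apply_le_norm
      (fun s a => Qtil t s a - (c s a + γ * ∑ s', P s a s' * Vbar t s')) s) (hD1 _ _) (hD1 _ _)
      (hthree t ht s (πstar s) (hπstar s))
    have hopt := Bellman_sub_Bellman c P h γ πstar (Vbar t) Vstar s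
    rw [← hVstar] at hopt
    unfold Bellman at hopt
    rw [hη, one_div_div] at hgap
    simp only [F]
    push_cast
    linarith [hproxy t ht s]
  have hsum := sum_le_sum step
  rw [sum_add_distrib, sum_range_sub', ← mul_sum] at hsum
  have hshift := sum_range_succ_sub_eq_sum_Ico (u := fun t => Vbar t s - Vstar s)
    (g := fun t => γ * ∑ s', (∑ a, πstar s a * P s a s') * (Vbar t s' - Vstar s')) hT
  simp only [F, Nat.cast_zero, zero_add] at hsum hshift
  linarith

/-- Strongly convex single-epoch recursion for stochastic value mirror
descent. With stepsizes `η_t = 2/(μ(t+1))`, a `μ`-strongly convex regularizer `h`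
relative to the Bregman divergence `D` of the ℓ₁-norm (`D(x,y) ≥ ‖x−y‖₁²/2`), the
per-step three-point inequality, and proxy values `V̄` satisfying
`V̄_{t+1}(s) ≤ ⟨c(s,·)+γP_sV̄_t, π_{t+1}(·|s)⟩ + h(π_{t+1}(·|s))`, the following holds
componentwise:
`(V̄_T − V*) + ∑_{t=1}^{T-1}(I − γP_{π*})(V̄_t − V*) + (μ(T+2)/2) D_{π_T}^{π*}
  ≤ μ D_{π_0}^{π*} + γP_{π*}(V̄_0 − V*) + (2/μ) ∑_{t=0}^{T-1} ‖Q̃^t − Q̄^t‖²_max · 1`,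
where `Q̄^t(s,·) = c(s,·) + γP_s V̄_t`. -/
theorem svmd_strongly_convex_single_epoch
    {S A : Type*} [Fintype S] [Fintype A]
    (γ : ℝ) (hγ0 : 0 < γ) (hγ1 : γ < 1)
    (μ : ℝ) (hμ : 0 < μ)
    (c : S → A → ℝ) (P : S → A → S → ℝ)
    (hP0 : ∀ s a s', 0 ≤ P s a s') (hP1 : ∀ s a, ∑ s', P s a s' = 1)
    (h : (A → ℝ) → ℝ)
    (D : (A → ℝ) → (A → ℝ) → ℝ)
    (hD1 : ∀ x y : A → ℝ, (∑ a, |x a - y a|) ^ 2 / 2 ≤ D x y)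
    (T : ℕ) (hT : 1 ≤ T)
    (η : ℕ → ℝ) (hη : ∀ t, η t = 2 / (μ * ((t : ℝ) + 1)))
    (π : ℕ → S → A → ℝ) (hπ : ∀ t s, π t s ∈ stdSimplex ℝ A)
    (Qtil : ℕ → S → A → ℝ)
    (Vbar : ℕ → S → ℝ)
    (hthree : ∀ t < T, ∀ s, ∀ p ∈ stdSimplex ℝ A,
      η t * ((∑ a, Qtil t s a * (π (t + 1) s a - p a)) + h (π (t + 1) s) - h p)
          + D (π t s) (π (t + 1) s)
        ≤ D (π t s) p - (1 + η t * μ) * D (π (t + 1) s) p)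
    (hproxy : ∀ t < T, ∀ s,
      Vbar (t + 1) s
        ≤ (∑ a, π (t + 1) s a * (c s a + γ * ∑ s', P s a s' * Vbar t s'))
            + h (π (t + 1) s))
    (πstar : S → A → ℝ) (hπstar : ∀ s, πstar s ∈ stdSimplex ℝ A)
    (Vstar : S → ℝ) (hVstar : ∀ s, Vstar s = Bellman c P h γ πstar Vstar s) :
    ∀ s,
      (Vbar T s - Vstar s)
        + (∑ t ∈ Finset.Ico 1 T, ((Vbar t s - Vstar s)
            - γ * ∑ s', (∑ a, πstar s a * P s a s') * (Vbar t s' - Vstar s')))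
        + (μ * ((T : ℝ) + 2) / 2) * D (π T s) (πstar s)
      ≤ μ * D (π 0 s) (πstar s)
        + γ * ∑ s', (∑ a, πstar s a * P s a s') * (Vbar 0 s' - Vstar s')
        + (2 / μ) * ∑ t ∈ Finset.range T,
            ‖(fun s a => Qtil t s a - (c s a + γ * ∑ s', P s a s' * Vbar t s')
              : S → A → ℝ)‖ ^ 2 :=
  svmd_strongly_convex_single_epoch_general γ μ hμ c P h D hD1 T hT η hη π Qtil Vbar hthree hproxy
    πstar hπstar Vstar hVstar
end
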